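/- arXiv:1803.09858 — 7 statements merged into one kernel-verified Lean document; each statement's English description precedes it below -/
import Mathlib

section
/- Let 0 = t_0 < t_1 < ⋯ < t_N = T be a mesh with steps τ_k = t_k − t_{k−1}, let α ∈ (0,1), and let a^{(n)}_{n−k} be the L1 kernel. Then for every fixed n with 2 ≤ n ≤ N and every k with 1 ≤ k ≤ n−1 one has a^{(n)}_{n−k−1} > ω_{1−α}(t_n − t_k) > a^{(n)}_{n−k}. -/
open Real Finset

/-- The kernel `ω_μ(s) = s^(μ-1)/Γ(μ)`. -/
noncomputable def omegaK (μ s : ℝ) : ℝ := s ^ (μ - 1) / Real.Gamma μ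

/-- The L1 kernel: `L1K α t n k` is `a^{(n)}_{n-k}`. -/
noncomputable def L1K (α : ℝ) (t : ℕ → ℝ) (n k : ℕ) : ℝ :=
  (omegaK (2 - α) (t n - t (k - 1)) - omegaK (2 - α) (t n - t k)) / (t k - t (k - 1))

lemma omegaK_deriv {α x : ℝ} (hα0 : 0 < α) (hα1 : α < 1) (hx : 0 < x) :
    HasDerivAt (omegaK (2 - α)) (omegaK (1 - α) x) x := by
  have h1α : (1 : ℝ) - α ≠ 0 := by linarith
  have hG : Real.Gamma (2 - α) = (1 - α) * Real.Gamma (1 - α) := by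
    have := Real.Gamma_add_one h1α
    rw [show (1 : ℝ) - α + 1 = 2 - α by ring] at this
    exact this
  have h : HasDerivAt (fun y : ℝ => y ^ ((2 : ℝ) - α - 1))
      ((2 - α - 1) * x ^ ((2 : ℝ) - α - 1 - 1)) x :=
    Real.hasDerivAt_rpow_const (Or.inl hx.ne')
  have h2 := h.div_const (Real.Gamma (2 - α))
  have heq : (2 - α - 1) * x ^ ((2 : ℝ) - α - 1 - 1) / Real.Gamma (2 - α)
      = omegaK (1 - α) x := by
    have hG0 : Real.Gamma (1 - α) ≠ 0 := (Real.Gamma_pos_of_pos (by linarith)).ne'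
    rw [omegaK, hG, show (2 : ℝ) - α - 1 - 1 = 1 - α - 1 by ring]
    rw [div_eq_div_iff (by positivity) hG0]
    ring
  rw [heq] at h2
  exact h2

lemma omegaK_anti {α x y : ℝ} (hα0 : 0 < α) (hα1 : α < 1) (hx : 0 < x) (hxy : x < y) :
    omegaK (1 - α) y < omegaK (1 - α) x := by
  have hG : 0 < Real.Gamma (1 - α) := Real.Gamma_pos_of_pos (by linarith)
  have : y ^ ((1 : ℝ) - α - 1) < x ^ ((1 : ℝ) - α - 1) :=
    Real.rpow_lt_rpow_of_neg hx hxy (by linarith)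
  unfold omegaK
  gcongr

lemma slope_bounds {α a b : ℝ} (hα0 : 0 < α) (hα1 : α < 1) (ha : 0 ≤ a) (hab : a < b) :
    omegaK (1 - α) b < (omegaK (2 - α) b - omegaK (2 - α) a) / (b - a) ∧
    (0 < a → (omegaK (2 - α) b - omegaK (2 - α) a) / (b - a) < omegaK (1 - α) a) := by
  have hcont : ContinuousOn (omegaK (2 - α)) (Set.Icc a b) := by
    apply Continuous.continuousOn
    exact (continuous_iff_continuousAt.mpr fun x =>
      Real.continuousAt_rpow_const x _ (Or.inr (by linarith))).div_const _
  obtain ⟨c, hc, hceq⟩ := exists_hasDerivAt_eq_slope (omegaK (2 - α)) (omegaK (1 - α)) hab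
    hcont (fun x hx => omegaK_deriv hα0 hα1 (lt_of_le_of_lt ha hx.1))
  constructor
  · rw [← hceq]
    exact omegaK_anti hα0 hα1 (lt_of_le_of_lt ha hc.1) hc.2
  · intro ha0
    rw [← hceq]
    exact omegaK_anti hα0 hα1 ha0 hc.1

theorem L1_kernel_bounds
    (T : ℝ) (hT : 0 < T) (N : ℕ) (hN : 1 ≤ N)
    (t : ℕ → ℝ) (ht0 : t 0 = 0) (htN : t N = T)
    (hmesh : ∀ k, 1 ≤ k → k ≤ N → t (k - 1) < t k)
    (α : ℝ) (hα0 : 0 < α) (hα1 : α < 1) :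
    ∀ n, 2 ≤ n → n ≤ N → ∀ k, 1 ≤ k → k ≤ n - 1 →
      L1K α t n (k + 1) > omegaK (1 - α) (t n - t k) ∧
      omegaK (1 - α) (t n - t k) > L1K α t n k := by
  have hmono : ∀ j, j ≤ N → ∀ i, i < j → t i < t j := by
    intro j
    induction j with
    | zero => intro _ i hi; omega
    | succ m ih =>
      intro hj i hi
      have hm : t m < t (m + 1) := by
        have := hmesh (m + 1) (by omega) hj
        simpa using this
      rcases Nat.lt_succ_iff_lt_or_eq.mp hi with h | h
      · exact (ih (by omega) i h).trans hm
      · subst h; exact hm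
  intro n hn2 hnN k hk1 hkn
  have hkn' : k + 1 ≤ n := by omega
  have htk : t k < t n := hmono n hnN k (by omega)
  constructor
  · -- upper part: L1K n (k+1) > ω(t n - t k)
    have ha : (0:ℝ) ≤ t n - t (k + 1) := by
      rcases eq_or_lt_of_le hkn' with h | h
      · rw [h]; simp
      · linarith [hmono n hnN (k + 1) h]
    have hab : t n - t (k + 1) < t n - t k := by
      have := hmesh (k + 1) (by omega) (by omega)
      simp only [Nat.add_sub_cancel] at this
      linarith
    have := (slope_bounds hα0 hα1 ha hab).1
    have hL : L1K α t n (k + 1) =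
        (omegaK (2 - α) (t n - t k) - omegaK (2 - α) (t n - t (k + 1))) /
          (t n - t k - (t n - t (k + 1))) := by
      rw [L1K, Nat.add_sub_cancel]
      ring_nf
    rw [hL]
    exact this
  · -- lower part
    have h0 : t (k - 1) < t k := hmesh k hk1 (by omega)
    have ha : (0:ℝ) < t n - t k := by linarith
    have hab : t n - t k < t n - t (k - 1) := by linarith
    have := (slope_bounds hα0 hα1 ha.le hab).2 ha
    have hL : L1K α t n k =
        (omegaK (2 - α) (t n - t (k - 1)) - omegaK (2 - α) (t n - t k)) /
          (t n - t (k - 1) - (t n - t k)) := by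
      rw [L1K]
      ring_nf
    rw [hL]
    exact this
end

section
/- Let 0 = t_0 < t_1 < ⋯ < t_N = T be a mesh with steps τ_k = t_k − t_{k−1}, let α ∈ (0,1), and let a^{(n)}_{n−k} be the L1 kernel. Then for every fixed n with 2 ≤ n ≤ N and every k with 1 ≤ k ≤ n−1 one has a^{(n)}_{n−k−1} − a^{(n)}_{n−k} > (1/2)[ω_{1−α}(t_n − t_k) − ω_{1−α}(t_n − t_{k−1})]. -/
open Real Finset

/-!
With `p = 1 - α`, `u = t n - t (k+1) < v = t n - t k < w = t n - t (k-1)` and `f x = x ^ p`, the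
kernels are `a_{n-k-1} = slope f u v / Γ(1+p)` and `a_{n-k} = slope f v w / Γ(1+p)`, and
`Γ(1+p) = p Γ(p)`. Strict concavity of `f` bounds `slope f u v` strictly from below by the
tangent slope `f' v = p v^(p-1)`, while convexity of `f' = p x^(p-1)` bounds
`slope f v w = (w - v)⁻¹ ∫_v^w f'` from above by the trapezoid value `(f' v + f' w) / 2`
(Hermite–Hadamard). Subtracting gives `slope f u v - slope f v w > (f' v - f' w) / 2`.
-/

open Set MeasureTheory

theorem ConvexOn.intervalIntegral_le_trapezoid {f : ℝ → ℝ} {a b : ℝ} (hab : a ≤ b)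
    (hf : ConvexOn ℝ (Icc a b) f) (hfi : IntervalIntegrable f volume a b) :
    ∫ x in a..b, f x ≤ (b - a) * (f a + f b) / 2 := by
  rcases hab.eq_or_lt with rfl | hlt
  · simp
  have hchord : ∀ x ∈ Icc a b, f x ≤ f a + slope f a b * (x - a) := by
    rintro x ⟨hax, hxb⟩
    rcases hax.eq_or_lt with rfl | hax
    · simp
    have hsec := hf.secant_mono (left_mem_Icc.2 hab) ⟨hax.le, hxb⟩ (right_mem_Icc.2 hab)
      hax.ne' hlt.ne' hxb
    rw [div_le_iff₀ (sub_pos.2 hax)] at hsec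
    rw [slope_def_field]
    linarith
  have hlin : Continuous fun x ↦ slope f a b * (x - a) := by fun_prop
  calc ∫ x in a..b, f x ≤ ∫ x in a..b, (f a + slope f a b * (x - a)) :=
        intervalIntegral.integral_mono_on hab hfi
          (intervalIntegrable_const.add (hlin.intervalIntegrable _ _)) hchord
    _ = (b - a) * (f a + f b) / 2 := by
        rw [intervalIntegral.integral_add intervalIntegrable_const (hlin.intervalIntegrable _ _),
          intervalIntegral.integral_const, intervalIntegral.integral_const_mul,
          intervalIntegral.integral_comp_sub_right (fun x ↦ x), integral_id, slope_def_field]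
        field_simp
        ring

theorem Real.convexOn_rpow_of_nonpos {q : ℝ} (hq : q ≤ 0) :
    ConvexOn ℝ (Ioi 0) fun x : ℝ ↦ x ^ q := by
  have hlog : ConvexOn ℝ (Ioi 0) fun x ↦ log x * q := by
    simpa [mul_comm] using (strictConcaveOn_log_Ioi.concaveOn.neg.smul (neg_nonneg.2 hq))
  have himage : Convex ℝ ((fun x ↦ log x * q) '' Ioi 0) :=
    convex_iff_isPreconnected.2 <| isPreconnected_Ioi.image _ <|
      (continuousOn_log.mono fun x hx ↦ ne_of_gt hx).mul continuousOn_const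
  exact ((convexOn_exp.subset (subset_univ _) himage).comp hlog
    (exp_monotone.monotoneOn _)).congr fun x hx ↦ (rpow_def_of_pos hx q).symm

theorem Real.slope_rpow_le_trapezoid {p v w : ℝ} (hp₀ : 0 < p) (hp₁ : p ≤ 1) (hv : 0 < v)
    (hvw : v < w) :
    slope (fun x : ℝ ↦ x ^ p) v w ≤ p * (v ^ (p - 1) + w ^ (p - 1)) / 2 := by
  have hpos : Icc v w ⊆ Ioi 0 := fun x hx ↦ hv.trans_le hx.1
  have hint : ∫ x in v..w, x ^ (p - 1) = (w ^ p - v ^ p) / p := by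
    simp [integral_rpow (Or.inl (by linarith : (-1 : ℝ) < p - 1))]
  have htrap := ((convexOn_rpow_of_nonpos (by linarith : p - 1 ≤ 0)).subset hpos
    (convex_Icc v w)).intervalIntegral_le_trapezoid hvw.le
    (intervalIntegral.intervalIntegrable_rpow' (by linarith))
  rw [hint, div_le_iff₀ hp₀] at htrap
  rw [slope_def_field, div_le_iff₀ (sub_pos.2 hvw)]
  linarith

theorem Real.mul_rpow_sub_one_lt_slope_rpow {p u v : ℝ} (hp₀ : 0 < p) (hp₁ : p < 1)
    (hu : 0 ≤ u) (huv : u < v) :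
    p * v ^ (p - 1) < slope (fun x : ℝ ↦ x ^ p) u v :=
  (strictConcaveOn_rpow hp₀ hp₁).lt_slope_of_hasDerivAt hu (hu.trans huv.le) huv
    (hasDerivAt_rpow_const (Or.inl (hu.trans_lt huv).ne'))

theorem Real.half_mul_sub_rpow_lt_slope_sub_slope {p u v w : ℝ} (hp₀ : 0 < p) (hp₁ : p < 1)
    (hu : 0 ≤ u) (huv : u < v) (hvw : v < w) :
    p * (v ^ (p - 1) - w ^ (p - 1)) / 2 <
      slope (fun x : ℝ ↦ x ^ p) u v - slope (fun x : ℝ ↦ x ^ p) v w := by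
  have := mul_rpow_sub_one_lt_slope_rpow hp₀ hp₁ hu huv
  have := slope_rpow_le_trapezoid hp₀ hp₁.le (hu.trans_lt huv) hvw
  linarith

theorem L1K_eq_slope (α : ℝ) (t : ℕ → ℝ) (n k : ℕ) :
    L1K α t n k =
      slope (fun x : ℝ ↦ x ^ (1 - α)) (t n - t k) (t n - t (k - 1)) / Gamma (2 - α) := by
  rw [L1K, omegaK, omegaK, slope_def_field, show 2 - α - 1 = 1 - α by ring,
    show t n - t (k - 1) - (t n - t k) = t k - t (k - 1) by ring]
  ring

theorem omegaK_one_sub (α s : ℝ) : omegaK (1 - α) s = s ^ (-α) / Gamma (1 - α) := by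
  rw [omegaK, sub_sub_cancel_left]

theorem Real.Gamma_two_sub {α : ℝ} (hα : α ≠ 1) :
    Gamma (2 - α) = (1 - α) * Gamma (1 - α) := by
  rw [show 2 - α = (1 - α) + 1 by ring, Gamma_add_one (sub_ne_zero.2 hα.symm)]

theorem L1_kernel_difference_bound_general
    (N : ℕ)
    (t : ℕ → ℝ)
    (hmesh : ∀ k, 1 ≤ k → k ≤ N → t (k - 1) < t k)
    (α : ℝ) (hα0 : 0 < α) (hα1 : α < 1) :
    ∀ n, 2 ≤ n → n ≤ N → ∀ k, 1 ≤ k → k ≤ n - 1 →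
      L1K α t n (k + 1) - L1K α t n k >
        (1 / 2) * (omegaK (1 - α) (t n - t k) - omegaK (1 - α) (t n - t (k - 1))) := by
  intro n _ hnN k hk hkn
  have hmono : StrictMonoOn t (Set.Iic N) :=
    strictMonoOn_Iic_of_lt_succ fun m hm ↦ by
      simpa [Order.succ_eq_add_one] using hmesh (m + 1) (by omega) hm
  have hu : 0 ≤ t n - t (k + 1) :=
    sub_nonneg.2 (hmono.monotoneOn (by simp; omega) (by simpa using hnN) (by omega))
  have huv : t n - t (k + 1) < t n - t k := by
    simpa using hmesh (k + 1) (by omega) (by omega)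
  have hvw : t n - t k < t n - t (k - 1) := sub_lt_sub_left (hmesh k hk (by omega)) _
  have key := half_mul_sub_rpow_lt_slope_sub_slope (p := 1 - α) (by linarith) (by linarith)
    hu huv hvw
  rw [show 1 - α - 1 = -α by ring] at key
  have hΓ := Gamma_pos_of_pos (by linarith : 0 < 1 - α)
  rw [L1K_eq_slope, L1K_eq_slope, Nat.add_sub_cancel, omegaK_one_sub, omegaK_one_sub,
    Gamma_two_sub hα1.ne, gt_iff_lt, ← sub_div, ← sub_div,
    lt_div_iff₀ (mul_pos (by linarith) hΓ)]
  calc 1 / 2 * (((t n - t k) ^ (-α) - (t n - t (k - 1)) ^ (-α)) / Gamma (1 - α)) *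
        ((1 - α) * Gamma (1 - α))
      = (1 - α) * ((t n - t k) ^ (-α) - (t n - t (k - 1)) ^ (-α)) / 2 := by
        field_simp
    _ < _ := key

theorem L1_kernel_difference_bound
    (T : ℝ) (hT : 0 < T) (N : ℕ) (hN : 1 ≤ N)
    (t : ℕ → ℝ) (ht0 : t 0 = 0) (htN : t N = T)
    (hmesh : ∀ k, 1 ≤ k → k ≤ N → t (k - 1) < t k)
    (α : ℝ) (hα0 : 0 < α) (hα1 : α < 1) :
    ∀ n, 2 ≤ n → n ≤ N → ∀ k, 1 ≤ k → k ≤ n - 1 →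
      L1K α t n (k + 1) - L1K α t n k >
        (1 / 2) * (omegaK (1 - α) (t n - t k) - omegaK (1 - α) (t n - t (k - 1))) :=
  L1_kernel_difference_bound_general N t hmesh α hα0 hα1
end

section
/- Under the SOE hypothesis, if the tolerance satisfies ε ≤ min{(1/3)ω_{1−α}(T), α·ω_{2−α}(1)} and all time steps satisfy τ_k ≤ 1, then for every fixed n with 2 ≤ n ≤ N the fast L1 kernel is strictly decreasing and positive: A^{(n)}_{k−1} > A^{(n)}_k > 0 for 1 ≤ k ≤ n−1. -/
open Real Finset MeasureTheory

/-- The fast L1 kernel: `fastK α t Nq θ w n k` is `A^{(n)}_{n-k}`: it coincides with the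
L1 kernel for `k = n` and is the average of the sum-of-exponentials approximation on
`[t_{k-1}, t_k]` for `k < n`. -/
noncomputable def fastK (α : ℝ) (t : ℕ → ℝ) (Nq : ℕ) (θ w : ℕ → ℝ) (n k : ℕ) : ℝ :=
  if k = n then L1K α t n n
  else (∫ s in (t (k - 1))..(t k), ∑ ℓ ∈ Finset.range Nq, w ℓ * Real.exp (-(θ ℓ) * (t n - s))) /
    (t k - t (k - 1))

/-!
For `k < n`, `A^{(n)}_{n-k}` is the mean of `s ↦ Σ ϖ^ℓ e^{-θ^ℓ (t_n - s)}` over `[t_{k-1}, t_k]`.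
This function is strictly increasing, so its mean over an interval lies strictly between its
values at the endpoints; consecutive means are therefore separated by the value at the common
endpoint, and all of them are positive. The only comparison left is with the diagonal entry
`A^{(n)}_0 = a^{(n)}_0 = τ_n^{-α}/Γ(2-α)`: the mean over `[t_{n-2}, t_{n-1}]` is below the value
at `t_{n-1}`, which the SOE bound at `τ_n` controls by `ω_{1-α}(τ_n) + ε`, and
`ω_{1-α}(τ_n) + α ω_{2-α}(1) ≤ τ_n^{-α}/Γ(2-α)` because `Γ(2-α) = (1-α) Γ(1-α)` and
`τ_n^{-α} ≥ 1`.
-/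

lemma intervalAverage_lt_of_strictMonoOn {f : ℝ → ℝ} {a b : ℝ} (hab : a < b)
    (hfc : ContinuousOn f (Set.Icc a b)) (hf : StrictMonoOn f (Set.Icc a b)) :
    (∫ x in a..b, f x) / (b - a) < f b := by
  have hb : b ∈ Set.Icc a b := Set.right_mem_Icc.mpr hab.le
  have h := intervalIntegral.integral_lt_integral_of_continuousOn_of_le_of_exists_lt hab hfc
    continuousOn_const (fun x hx => hf.monotoneOn (Set.Ioc_subset_Icc_self hx) hb hx.2)
    ⟨a, Set.left_mem_Icc.mpr hab.le, hf (Set.left_mem_Icc.mpr hab.le) hb hab⟩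
  rw [intervalIntegral.integral_const, smul_eq_mul] at h
  rwa [div_lt_iff₀ (sub_pos.mpr hab), mul_comm]

lemma lt_intervalAverage_of_strictMonoOn {f : ℝ → ℝ} {a b : ℝ} (hab : a < b)
    (hfc : ContinuousOn f (Set.Icc a b)) (hf : StrictMonoOn f (Set.Icc a b)) :
    f a < (∫ x in a..b, f x) / (b - a) := by
  have ha : a ∈ Set.Icc a b := Set.left_mem_Icc.mpr hab.le
  have h := intervalIntegral.integral_lt_integral_of_continuousOn_of_le_of_exists_lt hab
    continuousOn_const hfc (fun x hx => hf.monotoneOn ha (Set.Ioc_subset_Icc_self hx) hx.1.le)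
    ⟨b, Set.right_mem_Icc.mpr hab.le, hf ha (Set.right_mem_Icc.mpr hab.le) hab⟩
  rw [intervalIntegral.integral_const, smul_eq_mul] at h
  rwa [lt_div_iff₀ (sub_pos.mpr hab), mul_comm]

lemma strictMonoOn_Iic_of_pred_lt {t : ℕ → ℝ} {N : ℕ}
    (ht : ∀ k, 1 ≤ k → k ≤ N → t (k - 1) < t k) : StrictMonoOn t (Set.Iic N) :=
  strictMonoOn_Iic_of_lt_succ fun m hm => by
    simpa only [Order.succ_eq_add_one, Nat.add_sub_cancel] using ht (m + 1) (by omega) hm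

lemma sub_pred_le_of_pred_lt {t : ℕ → ℝ} {N n : ℕ}
    (ht : ∀ k, 1 ≤ k → k ≤ N → t (k - 1) < t k) (hn : n ≤ N) :
    t n - t (n - 1) ≤ t N - t 0 := by
  have hmono := (strictMonoOn_Iic_of_pred_lt ht).monotoneOn
  have hfirst : t 0 ≤ t (n - 1) :=
    hmono (Set.mem_Iic.mpr (Nat.zero_le N)) (Set.mem_Iic.mpr (by omega)) (Nat.zero_le _)
  linarith [hmono (Set.mem_Iic.mpr hn) (Set.mem_Iic.mpr le_rfl) hn]

noncomputable def soeSum (Nq : ℕ) (θ w : ℕ → ℝ) (s : ℝ) : ℝ :=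
  ∑ ℓ ∈ Finset.range Nq, w ℓ * Real.exp (-(θ ℓ) * s)

section soeSum

variable {Nq : ℕ} {θ w : ℕ → ℝ}

lemma continuous_soeSum : Continuous (soeSum Nq θ w) :=
  continuous_finsetSum _ fun _ _ => by fun_prop

lemma soeSum_pos (hNq : 1 ≤ Nq) (hw : ∀ ℓ, ℓ < Nq → 0 < w ℓ) (s : ℝ) : 0 < soeSum Nq θ w s :=
  Finset.sum_pos (fun ℓ hℓ => mul_pos (hw ℓ (Finset.mem_range.mp hℓ)) (Real.exp_pos _))
    (Finset.nonempty_range_iff.mpr (by omega))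

lemma strictAnti_soeSum (hNq : 1 ≤ Nq) (hθ : ∀ ℓ, ℓ < Nq → 0 < θ ℓ)
    (hw : ∀ ℓ, ℓ < Nq → 0 < w ℓ) : StrictAnti (soeSum Nq θ w) := by
  intro s₁ s₂ hs
  refine Finset.sum_lt_sum_of_nonempty (Finset.nonempty_range_iff.mpr (by omega)) fun ℓ hℓ => ?_
  have hθℓ := hθ ℓ (Finset.mem_range.mp hℓ)
  exact mul_lt_mul_of_pos_left (Real.exp_lt_exp.mpr (by nlinarith)) (hw ℓ (Finset.mem_range.mp hℓ))

end soeSum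

lemma omegaK_zero {μ : ℝ} (hμ : μ ≠ 1) : omegaK μ 0 = 0 := by
  rw [omegaK, Real.zero_rpow (sub_ne_zero.mpr hμ), zero_div]

lemma omegaK_one_sub_add_le {α τ : ℝ} (hα0 : 0 ≤ α) (hα1 : α < 1) (hτ0 : 0 < τ) (hτ1 : τ ≤ 1) :
    omegaK (1 - α) τ + α * omegaK (2 - α) 1 ≤ omegaK (2 - α) τ / τ := by
  have hΓ : Real.Gamma (2 - α) = (1 - α) * Real.Gamma (1 - α) := by
    rw [show (2 : ℝ) - α = (1 - α) + 1 by ring, Real.Gamma_add_one (by linarith)]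
  have hpow : τ ^ (2 - α - 1) / τ = τ ^ (1 - α - 1) := by
    rw [show (2 : ℝ) - α - 1 = (1 - α - 1) + 1 by ring, Real.rpow_add_one hτ0.ne',
      mul_div_cancel_right₀ _ hτ0.ne']
  have hone : 1 ≤ τ ^ (1 - α - 1) :=
    Real.one_le_rpow_of_pos_of_le_one_of_nonpos hτ0 hτ1 (by linarith)
  have hΓ2 : 0 < Real.Gamma (2 - α) := Real.Gamma_pos_of_pos (by linarith)
  have hfirst : τ ^ (1 - α - 1) / Real.Gamma (1 - α) =
      (1 - α) * τ ^ (1 - α - 1) / Real.Gamma (2 - α) := by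
    rw [hΓ, mul_div_mul_left _ _ (sub_ne_zero.mpr hα1.ne')]
  rw [omegaK, omegaK, omegaK, Real.one_rpow, div_right_comm, hpow, hfirst, mul_one_div, ← add_div]
  gcongr
  nlinarith

section fastK

variable {α : ℝ} {t : ℕ → ℝ} {Nq : ℕ} {θ w : ℕ → ℝ} {n m : ℕ}

lemma fastK_of_ne (hm : m ≠ n) :
    fastK α t Nq θ w n m =
      (∫ s in (t (m - 1))..(t m), soeSum Nq θ w (t n - s)) / (t m - t (m - 1)) :=
  if_neg hm

lemma fastK_mem_Ioo (hNq : 1 ≤ Nq) (hθ : ∀ ℓ, ℓ < Nq → 0 < θ ℓ) (hw : ∀ ℓ, ℓ < Nq → 0 < w ℓ)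
    (hm : m ≠ n) (hstep : t (m - 1) < t m) :
    fastK α t Nq θ w n m ∈
      Set.Ioo (soeSum Nq θ w (t n - t (m - 1))) (soeSum Nq θ w (t n - t m)) := by
  have hmono : StrictMono fun s => soeSum Nq θ w (t n - s) :=
    fun _ _ h => strictAnti_soeSum hNq hθ hw (by linarith)
  have hcont : ContinuousOn (fun s => soeSum Nq θ w (t n - s)) (Set.Icc (t (m - 1)) (t m)) :=
    (continuous_soeSum.comp (continuous_sub_left (t n))).continuousOn
  rw [fastK_of_ne hm]
  exact ⟨lt_intervalAverage_of_strictMonoOn hstep hcont (hmono.strictMonoOn _),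
    intervalAverage_lt_of_strictMonoOn hstep hcont (hmono.strictMonoOn _)⟩

lemma fastK_self (hα : α < 1) :
    fastK α t Nq θ w n n = omegaK (2 - α) (t n - t (n - 1)) / (t n - t (n - 1)) := by
  rw [fastK, if_pos rfl, L1K, sub_self, omegaK_zero (by linarith), sub_zero]

end fastK

theorem fast_kernel_monotone_positive_general
    (T : ℝ) (N : ℕ)
    (t : ℕ → ℝ) (ht0 : t 0 = 0) (htN : t N = T)
    (hmesh : ∀ k, 1 ≤ k → k ≤ N → t (k - 1) < t k)
    (α : ℝ) (hα0 : 0 < α) (hα1 : α < 1)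
    (Nq : ℕ) (hNq : 1 ≤ Nq) (θ w : ℕ → ℝ)
    (hθ : ∀ ℓ, ℓ < Nq → 0 < θ ℓ) (hw : ∀ ℓ, ℓ < Nq → 0 < w ℓ)
    (ε : ℝ)
    (hSOE : ∀ s : ℝ, (∃ k, 1 ≤ k ∧ k ≤ N ∧ t k - t (k - 1) ≤ s) → s ≤ T →
      |omegaK (1 - α) s - ∑ ℓ ∈ Finset.range Nq, w ℓ * Real.exp (-(θ ℓ) * s)| ≤ ε)
    (hεb : ε ≤ min ((1 / 3) * omegaK (1 - α) T) (α * omegaK (2 - α) 1))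
    (hτ1 : ∀ k, 1 ≤ k → k ≤ N → t k - t (k - 1) ≤ 1) :
    ∀ n, 2 ≤ n → n ≤ N → ∀ k, 1 ≤ k → k ≤ n - 1 →
      fastK α t Nq θ w n (n - k + 1) > fastK α t Nq θ w n (n - k) ∧
      fastK α t Nq θ w n (n - k) > 0 := by
  intro n hn2 hnN k hk1 hk
  have hstep : ∀ m, 1 ≤ m → m ≤ n → t (m - 1) < t m := fun m hm hmn => hmesh m hm (hmn.trans hnN)
  obtain ⟨hlow, hup⟩ := fastK_mem_Ioo (α := α) (n := n) (m := n - k) hNq hθ hw (by omega)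
    (hstep _ (by omega) (by omega))
  refine ⟨?_, (soeSum_pos hNq hw _).trans hlow⟩
  rcases eq_or_ne (n - k + 1) n with hlast | hinner
  · have hprev : n - k = n - 1 := by omega
    have hτ0 : 0 < t n - t (n - 1) := sub_pos.mpr (hstep n (by omega) le_rfl)
    have hτT : t n - t (n - 1) ≤ T := by
      simpa only [htN, ht0, sub_zero] using sub_pred_le_of_pred_lt hmesh hnN
    have hSOEτ := (abs_le.mp (hSOE _ ⟨n, by omega, hnN, le_rfl⟩ hτT)).1
    rw [hlast, fastK_self hα1]
    calc fastK α t Nq θ w n (n - k) < soeSum Nq θ w (t n - t (n - 1)) := hprev ▸ hup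
      _ ≤ omegaK (1 - α) (t n - t (n - 1)) + ε := by unfold soeSum; linarith
      _ ≤ omegaK (1 - α) (t n - t (n - 1)) + α * omegaK (2 - α) 1 := by
        gcongr; exact hεb.trans (min_le_right _ _)
      _ ≤ _ := omegaK_one_sub_add_le hα0.le hα1 hτ0 (hτ1 n (by omega) hnN)
  · have hnext := (fastK_mem_Ioo (α := α) hNq hθ hw hinner (hstep _ (by omega) (by omega))).1
    rw [Nat.add_sub_cancel] at hnext
    exact hup.trans hnext

theorem fast_kernel_monotone_positive
    (T : ℝ) (hT : 0 < T) (N : ℕ) (hN : 1 ≤ N)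
    (t : ℕ → ℝ) (ht0 : t 0 = 0) (htN : t N = T)
    (hmesh : ∀ k, 1 ≤ k → k ≤ N → t (k - 1) < t k)
    (α : ℝ) (hα0 : 0 < α) (hα1 : α < 1)
    (Nq : ℕ) (hNq : 1 ≤ Nq) (θ w : ℕ → ℝ)
    (hθ : ∀ ℓ, ℓ < Nq → 0 < θ ℓ) (hw : ∀ ℓ, ℓ < Nq → 0 < w ℓ)
    (ε : ℝ) (hε : 0 < ε)
    (hSOE : ∀ s : ℝ, (∃ k, 1 ≤ k ∧ k ≤ N ∧ t k - t (k - 1) ≤ s) → s ≤ T →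
      |omegaK (1 - α) s - ∑ ℓ ∈ Finset.range Nq, w ℓ * Real.exp (-(θ ℓ) * s)| ≤ ε)
    (hεb : ε ≤ min ((1 / 3) * omegaK (1 - α) T) (α * omegaK (2 - α) 1))
    (hτ1 : ∀ k, 1 ≤ k → k ≤ N → t k - t (k - 1) ≤ 1) :
    ∀ n, 2 ≤ n → n ≤ N → ∀ k, 1 ≤ k → k ≤ n - 1 →
      fastK α t Nq θ w n (n - k + 1) > fastK α t Nq θ w n (n - k) ∧
      fastK α t Nq θ w n (n - k) > 0 :=
  fast_kernel_monotone_positive_general T N t ht0 htN hmesh α hα0 hα1 Nq hNq θ w hθ hw ε hSOE hεb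
    hτ1
end

section
/- Let A^{(n)}_{j} (0 ≤ j ≤ n−1, 1 ≤ n ≤ N) be discrete kernels satisfying assumption A1 (monotone and positive). Then the complementary kernels P^{(n)}_{n−j} defined by the recursion are well defined, nonnegative, and satisfy the identity Σ_{j=k}^{n} P^{(n)}_{n−j} A^{(j)}_{j−k} = 1 for all 1 ≤ k ≤ n ≤ N. -/
/-!
Rewriting the recursion as `P_j A_j(0) = ∑_{k > j} (A_k(k-j-1) - A_k(k-j)) P_k` gives both claims
by downward induction on `j`. Nonnegativity: the right-hand side is a sum of products of
nonnegative kernel differences (A1) with already nonnegative `P_k`. Identity: adding the rewritten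
recursion to `∑_{k > j} P_k A_k(k-j)` telescopes each summand to `P_k A_k(k-j-1)`, so the sum
starting at `j` equals the one starting at `j + 1`, and the sum starting at `n` is `P_n A_n(0) = 1`.
-/

open Finset

/-- `p j` stands for `P^{(n)}_{n-j}`. -/
structure IsComplementaryKernel (A : ℕ → ℕ → ℝ) (n : ℕ) (p : ℕ → ℝ) : Prop where
  mul_diag : p n * A n 0 = 1
  mul_rec : ∀ j, 1 ≤ j → j < n →
    p j * A j 0 = ∑ k ∈ Icc (j + 1) n, (A k (k - j - 1) - A k (k - j)) * p k

namespace IsComplementaryKernel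

variable {A : ℕ → ℕ → ℝ} {n : ℕ} {p : ℕ → ℝ}

lemma of_one_div (hA : ∀ j, 1 ≤ j → j ≤ n → A j 0 ≠ 0) (hn : 1 ≤ n)
    (hdiag : p n = 1 / A n 0)
    (hrec : ∀ j, 1 ≤ j → j < n →
      p j = (1 / A j 0) * ∑ k ∈ Icc (j + 1) n, (A k (k - j - 1) - A k (k - j)) * p k) :
    IsComplementaryKernel A n p where
  mul_diag := by rw [hdiag, one_div_mul_cancel (hA n hn le_rfl)]
  mul_rec j hj hjn := by
    rw [hrec j hj hjn, mul_comm, ← mul_assoc, mul_one_div_cancel (hA j hj hjn.le), one_mul]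

lemma sum_Icc_mul_eq_sum_Icc_succ (hp : IsComplementaryKernel A n p) {j : ℕ} (hj : 1 ≤ j)
    (hjn : j < n) :
    ∑ k ∈ Icc j n, p k * A k (k - j) = ∑ k ∈ Icc (j + 1) n, p k * A k (k - (j + 1)) := by
  rw [← add_sum_Ioc_eq_sum_Icc hjn.le, ← Icc_add_one_left_eq_Ioc, Nat.sub_self,
    hp.mul_rec j hj hjn, ← sum_add_distrib]
  refine sum_congr rfl fun k _ => ?_
  rw [Nat.sub_add_eq]
  ring

lemma sum_Icc_mul_eq_one (hp : IsComplementaryKernel A n p) {k : ℕ} (hk : 1 ≤ k)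
    (hkn : k ≤ n) :
    ∑ j ∈ Icc k n, p j * A j (j - k) = 1 := by
  induction hkn using Nat.decreasingInduction with
  | self => rw [Icc_self, sum_singleton, Nat.sub_self, hp.mul_diag]
  | of_succ j hjn ih => rw [hp.sum_Icc_mul_eq_sum_Icc_succ hk hjn, ih (by omega)]

lemma nonneg (hp : IsComplementaryKernel A n p) (hA0 : ∀ j, 1 ≤ j → j ≤ n → 0 < A j 0)
    (hmono : ∀ j k, 1 ≤ j → j < k → k ≤ n → A k (k - j) ≤ A k (k - j - 1))
    {j : ℕ} (hj : 1 ≤ j) (hjn : j ≤ n) :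
    0 ≤ p j := by
  suffices h : ∀ i ∈ Icc j n, 0 ≤ p i from h j (left_mem_Icc.2 hjn)
  induction hjn using Nat.decreasingInduction with
  | self =>
    intro i hi
    rw [Icc_self, mem_singleton] at hi
    subst hi
    exact nonneg_of_mul_nonneg_left (hp.mul_diag ▸ zero_le_one) (hA0 i hj le_rfl)
  | of_succ m hmn ih =>
    intro i hi
    obtain rfl | hmi := (mem_Icc.1 hi).1.eq_or_lt
    · refine nonneg_of_mul_nonneg_left ?_ (hA0 m hj hmn.le)
      rw [hp.mul_rec m hj hmn]
      refine sum_nonneg fun k hk => mul_nonneg ?_ (ih (by omega) k hk)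
      exact sub_nonneg.2 (hmono m k hj (mem_Icc.1 hk).1 (mem_Icc.1 hk).2)
    · exact ih (by omega) i (mem_Icc.2 ⟨hmi, (mem_Icc.1 hi).2⟩)

end IsComplementaryKernel

theorem complementary_kernel_nonneg_and_identity_general
    (N : ℕ)
    (A : ℕ → ℕ → ℝ)
    -- assumption A1: the kernel is positive and decreasing in its lower index
    (hA1 : ∀ n k, 2 ≤ k → k ≤ n → n ≤ N → A n (k - 2) ≥ A n (k - 1) ∧ 0 < A n (k - 1))
    (hApos : ∀ n, 1 ≤ n → n ≤ N → 0 < A n 0)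
    -- the complementary kernel `P n j = P^{(n)}_{n-j}`, defined by the recursion
    (P : ℕ → ℕ → ℝ)
    (hPdiag : ∀ n, 1 ≤ n → n ≤ N → P n n = 1 / A n 0)
    (hPrec : ∀ n j, 1 ≤ j → j + 1 ≤ n → n ≤ N →
      P n j = (1 / A j 0) *
        ∑ k ∈ Finset.Icc (j + 1) n, (A k (k - j - 1) - A k (k - j)) * P n k) :
    (∀ n j, 1 ≤ j → j ≤ n → n ≤ N → 0 ≤ P n j) ∧
    (∀ n k, 1 ≤ k → k ≤ n → n ≤ N → ∑ j ∈ Finset.Icc k n, P n j * A j (j - k) = 1) := by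
  have hP : ∀ n, 1 ≤ n → n ≤ N → IsComplementaryKernel A n (P n) := fun n hn hnN =>
    .of_one_div (fun j hj hjn => (hApos j hj (hjn.trans hnN)).ne') hn (hPdiag n hn hnN)
      (fun j hj hjn => hPrec n j hj hjn hnN)
  have hmono : ∀ j k, 1 ≤ j → j < k → k ≤ N → A k (k - j) ≤ A k (k - j - 1) := by
    intro j k hj hjk hkN
    have h := (hA1 k (k - j + 1) (by omega) (by omega) hkN).1
    rwa [Nat.add_sub_cancel, show k - j + 1 - 2 = k - j - 1 by omega] at h
  refine ⟨fun n j hj hjn hnN => ?_, fun n k hk hkn hnN => ?_⟩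
  · exact (hP n (hj.trans hjn) hnN).nonneg (fun i hi hin => hApos i hi (hin.trans hnN))
      (fun i k hi hik hkn => hmono i k hi hik (hkn.trans hnN)) hj hjn
  · exact (hP n (hk.trans hkn) hnN).sum_Icc_mul_eq_one hk hkn

theorem complementary_kernel_nonneg_and_identity
    (N : ℕ) (hN : 1 ≤ N)
    (A : ℕ → ℕ → ℝ)
    -- assumption A1: the kernel is positive and decreasing in its lower index
    (hA1 : ∀ n k, 2 ≤ k → k ≤ n → n ≤ N → A n (k - 2) ≥ A n (k - 1) ∧ 0 < A n (k - 1))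
    (hApos : ∀ n, 1 ≤ n → n ≤ N → 0 < A n 0)
    -- the complementary kernel `P n j = P^{(n)}_{n-j}`, defined by the recursion
    (P : ℕ → ℕ → ℝ)
    (hPdiag : ∀ n, 1 ≤ n → n ≤ N → P n n = 1 / A n 0)
    (hPrec : ∀ n j, 1 ≤ j → j + 1 ≤ n → n ≤ N →
      P n j = (1 / A j 0) *
        ∑ k ∈ Finset.Icc (j + 1) n, (A k (k - j - 1) - A k (k - j)) * P n k) :
    (∀ n j, 1 ≤ j → j ≤ n → n ≤ N → 0 ≤ P n j) ∧
    (∀ n k, 1 ≤ k → k ≤ n → n ≤ N → ∑ j ∈ Finset.Icc k n, P n j * A j (j - k) = 1) :=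
  complementary_kernel_nonneg_and_identity_general N A hA1 hApos P hPdiag hPrec
end

section
/- Let 0 = t_0 < t_1 < ⋯ < t_N = T be a mesh with steps τ_k = t_k − t_{k−1}, let α ∈ (0,1), and let A^{(n)}_{j} be discrete kernels satisfying assumptions A1 and A2 with constant π_A > 0. Then the complementary kernels satisfy Σ_{j=1}^{n} P^{(n)}_{n−j} ≤ π_A · ω_{1+α}(t_n) for all 1 ≤ n ≤ N. -/
open Real Finset MeasureTheory

/-!
Put `q_k = ∫_{t_{k-1}}^{t_k} ω_α`. Split the Beta identity
`∫_0^{t_j} ω_{1-α}(t_j - s) ω_α(s) ds = 1` over the mesh cells and apply Chebyshev's integral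
inequality on each cell (`ω_{1-α}(t_j - ·)` increases, `ω_α` decreases); with A2 this gives
`1 ≤ π_A ∑_k A^{(j)}_{j-k} q_k`. The complementary kernels are nonnegative by A1 and satisfy
`∑_{j=k}^n P^{(n)}_{n-j} A^{(j)}_{j-k} = 1`, so weighting the previous inequality by them and
summing over `j` gives `∑_j P^{(n)}_{n-j} ≤ π_A ∑_k q_k = π_A ω_{1+α}(t_n)`.
-/

section Chebyshev

variable {X : Type*} [MeasurableSpace X] [LinearOrder X] {μ : Measure X} [IsFiniteMeasure μ]
  {s : Set X} {f g : X → ℝ}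

theorem measureReal_univ_mul_integral_mul_le_of_monotoneOn_antitoneOn (hs : ∀ᵐ x ∂μ, x ∈ s)
    (hf : MonotoneOn f s) (hg : AntitoneOn g s) (hfi : Integrable f μ) (hgi : Integrable g μ)
    (hfgi : Integrable (fun x ↦ f x * g x) μ) :
    μ.real Set.univ * ∫ x, f x * g x ∂μ ≤ (∫ x, f x ∂μ) * ∫ x, g x ∂μ := by
  set K : X × X → ℝ := fun z ↦ f z.1 * g z.2 - f z.1 * g z.1 * 1
  have hKi : Integrable K (μ.prod μ) :=
    (hfi.mul_prod hgi).sub (hfgi.mul_prod (integrable_const 1))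
  have hKsi : Integrable (fun z ↦ K z.swap) (μ.prod μ) := hKi.swap
  have hK : ∫ z, K z ∂μ.prod μ =
      (∫ x, f x ∂μ) * (∫ x, g x ∂μ) - μ.real Set.univ * ∫ x, f x * g x ∂μ := by
    have h := integral_prod_mul (μ := μ) (ν := μ) (fun x ↦ f x * g x) (fun _ ↦ (1 : ℝ))
    rw [integral_const, smul_eq_mul, mul_one] at h
    rw [integral_sub (hfi.mul_prod hgi) (hfgi.mul_prod (integrable_const 1)), integral_prod_mul,
      h, mul_comm (∫ x, f x * g x ∂μ)]
  -- symmetrising `K` produces the pointwise nonnegative integrand `(f x - f y) * (g y - g x)`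
  have hsym : 0 ≤ ∫ z, K z + K z.swap ∂μ.prod μ := by
    refine integral_nonneg_of_ae ?_
    filter_upwards [Measure.quasiMeasurePreserving_fst.ae hs,
      Measure.quasiMeasurePreserving_snd.ae hs] with z h1 h2
    simp only [K, Prod.fst_swap, Prod.snd_swap, Pi.zero_apply]
    rcases le_total z.1 z.2 with h | h
    · nlinarith [hf h1 h2 h, hg h1 h2 h]
    · nlinarith [hf h2 h1 h, hg h2 h1 h]
  rw [integral_add hKi hKsi, integral_prod_swap K, hK] at hsym
  linarith

end Chebyshev

section Omega

variable {μ ν : ℝ}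

theorem omegaK_nonneg (hμ : 0 < μ) {s : ℝ} (hs : 0 ≤ s) : 0 ≤ omegaK μ s :=
  div_nonneg (rpow_nonneg hs _) (Gamma_pos_of_pos hμ).le

theorem omegaK_pos (hμ : 0 < μ) {s : ℝ} (hs : 0 < s) : 0 < omegaK μ s :=
  div_pos (rpow_pos_of_pos hs _) (Gamma_pos_of_pos hμ)

theorem antitoneOn_omegaK (hμ : 0 < μ) (hμ1 : μ ≤ 1) : AntitoneOn (omegaK μ) (Set.Ioi 0) :=
  fun _ hx _ _ hxy ↦ div_le_div_of_nonneg_right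
    (rpow_le_rpow_of_nonpos hx hxy (by linarith)) (Gamma_pos_of_pos hμ).le

theorem intervalIntegrable_omegaK (hμ : 0 < μ) (a b : ℝ) :
    IntervalIntegrable (omegaK μ) volume a b :=
  (intervalIntegral.intervalIntegrable_rpow' (by linarith)).div_const _

theorem integral_omegaK (hμ : 0 < μ) (c : ℝ) : ∫ s in 0..c, omegaK μ s = omegaK (μ + 1) c := by
  simp only [omegaK]
  rw [intervalIntegral.integral_div, integral_rpow (Or.inl (by linarith)), sub_add_cancel,
    zero_rpow hμ.ne', sub_zero, add_sub_cancel_right, Gamma_add_one hμ.ne', div_div]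

theorem integral_rpow_mul_sub_rpow (hμ : 0 < μ) (hν : 0 < ν) {c : ℝ} (hc : 0 < c) :
    ∫ s in 0..c, s ^ (ν - 1) * (c - s) ^ (μ - 1) =
      c ^ (μ + ν - 1) * (Gamma μ * Gamma ν / Gamma (μ + ν)) := by
  apply Complex.ofReal_injective
  have h := Complex.betaIntegral_scaled ν μ hc
  rw [Complex.betaIntegral_eq_Gamma_mul_div _ _ (by simpa) (by simpa)] at h
  rw [← intervalIntegral.integral_ofReal]
  convert h using 1
  · refine intervalIntegral.integral_congr fun s hs ↦ ?_
    rw [Set.uIcc_of_le hc.le] at hs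
    rw [Complex.ofReal_mul, Complex.ofReal_cpow hs.1, Complex.ofReal_cpow (by linarith [hs.2])]
    push_cast
    ring_nf
  · rw [Complex.ofReal_mul, Complex.ofReal_cpow hc.le, ← Complex.ofReal_add, add_comm ν μ,
      Complex.Gamma_ofReal, Complex.Gamma_ofReal, Complex.Gamma_ofReal]
    push_cast
    ring

theorem integral_omegaK_sub_mul_omegaK (hμ : 0 < μ) (hν : 0 < ν) {c : ℝ} (hc : 0 < c) :
    ∫ s in 0..c, omegaK μ (c - s) * omegaK ν s = omegaK (μ + ν) c := by
  have hΓμ := (Gamma_pos_of_pos hμ).ne'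
  have hΓν := (Gamma_pos_of_pos hν).ne'
  have hΓ := (Gamma_pos_of_pos (add_pos hμ hν)).ne'
  simp only [omegaK, div_mul_div_comm, intervalIntegral.integral_div]
  simp only [mul_comm ((c - _) ^ (μ - 1))]
  rw [integral_rpow_mul_sub_rpow hμ hν hc]
  field_simp

-- a non-integrable function has interval integral `0`, but this one integrates to `ω_{μ+ν}(c) > 0`
theorem intervalIntegrable_omegaK_sub_mul_omegaK (hμ : 0 < μ) (hν : 0 < ν) {c : ℝ} (hc : 0 < c) :
    IntervalIntegrable (fun s ↦ omegaK μ (c - s) * omegaK ν s) volume 0 c :=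
  intervalIntegral.intervalIntegrable_of_integral_ne_zero <| by
    rw [integral_omegaK_sub_mul_omegaK hμ hν hc]
    exact (omegaK_pos (add_pos hμ hν) hc).ne'

theorem mul_integral_omegaK_sub_mul_omegaK_le (hμ : 0 < μ) (hμ1 : μ ≤ 1) (hν : 0 < ν) (hν1 : ν ≤ 1)
    {a b c : ℝ} (ha : 0 ≤ a) (hab : a < b) (hbc : b ≤ c) :
    (b - a) * ∫ s in a..b, omegaK μ (c - s) * omegaK ν s ≤
      (∫ s in a..b, omegaK μ (c - s)) * ∫ s in a..b, omegaK ν s := by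
  have hIoo : volume.restrict (Set.Ioc a b) = volume.restrict (Set.Ioo a b) :=
    (Measure.restrict_congr_set Ioo_ae_eq_Ioc).symm
  have hint : ∀ {h : ℝ → ℝ}, IntervalIntegrable h volume a b →
      Integrable h (volume.restrict (Set.Ioo a b)) := fun hh ↦
    hIoo ▸ (intervalIntegrable_iff_integrableOn_Ioc_of_le hab.le).1 hh
  have hvol : (volume.restrict (Set.Ioo a b)).real Set.univ = b - a := by simp [hab.le]
  simp only [intervalIntegral.integral_of_le hab.le, hIoo, ← hvol]
  refine measureReal_univ_mul_integral_mul_le_of_monotoneOn_antitoneOn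
    (ae_restrict_mem measurableSet_Ioo)
    (fun x hx y hy hxy ↦ antitoneOn_omegaK hμ hμ1 (show 0 < c - y by linarith [hy.2])
      (show 0 < c - x by linarith [hx.2]) (by linarith))
    ((antitoneOn_omegaK hν hν1).mono fun x hx ↦ ha.trans_lt hx.1) (hint ?_)
    (hint (intervalIntegrable_omegaK hν a b)) (hint ?_)
  · simpa using (intervalIntegrable_omegaK hμ (c - a) (c - b)).comp_sub_left c
  · refine (intervalIntegrable_omegaK_sub_mul_omegaK hμ hν (by linarith)).mono_set ?_
    rw [Set.uIcc_of_le hab.le, Set.uIcc_of_le (by linarith)]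
    exact Set.Icc_subset_Icc ha hbc

end Omega

theorem sum_Icc_integral_eq_integral {t : ℕ → ℝ} {f : ℝ → ℝ} {m : ℕ}
    (hf : ∀ k < m, IntervalIntegrable f volume (t k) (t (k + 1))) :
    ∑ k ∈ Icc 1 m, ∫ x in t (k - 1)..t k, f x = ∫ x in t 0..t m, f x := by
  rw [← intervalIntegral.sum_integral_adjacent_intervals hf, ← Ico_add_one_right_eq_Icc,
    sum_Ico_eq_sum_range]
  simp [add_comm]

-- `P j` stands for `P^{(n)}_{n-j}` and `A j i` for `A^{(j)}_i`.
structure IsComplementaryKernel_s7 (A : ℕ → ℕ → ℝ) (n : ℕ) (P : ℕ → ℝ) : Prop where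
  diag : P n = 1 / A n 0
  recurrence : ∀ j, 1 ≤ j → j < n →
    P j = 1 / A j 0 * ∑ k ∈ Icc (j + 1) n, (A k (k - j - 1) - A k (k - j)) * P k

namespace IsComplementaryKernel_s7

variable {A : ℕ → ℕ → ℝ} {n : ℕ} {P : ℕ → ℝ}

theorem sum_mul_eq_one (hP : IsComplementaryKernel_s7 A n P) (hA : ∀ j ∈ Icc 1 n, A j 0 ≠ 0) :
    ∀ k ∈ Icc 1 n, ∑ j ∈ Icc k n, P j * A j (j - k) = 1 := by
  intro k hk
  rw [mem_Icc] at hk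
  refine Nat.decreasingInduction' (fun i hin hki ih ↦ ?_) hk.2 ?_
  · have hi : 1 ≤ i := hk.1.trans hki
    have hAi : A i 0 ≠ 0 := hA i (mem_Icc.2 ⟨hi, hin.le⟩)
    calc ∑ j ∈ Icc i n, P j * A j (j - i)
        = P i * A i 0 + ∑ j ∈ Icc (i + 1) n, P j * A j (j - i) := by
          rw [Icc_eq_cons_Ioc hin.le, sum_cons, Nat.sub_self, Icc_add_one_left_eq_Ioc]
      _ = ∑ j ∈ Icc (i + 1) n, ((A j (j - i - 1) - A j (j - i)) * P j + P j * A j (j - i)) := by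
          rw [hP.recurrence i hi hin, sum_add_distrib]
          field_simp
      _ = ∑ j ∈ Icc (i + 1) n, P j * A j (j - (i + 1)) :=
          sum_congr rfl fun j _ ↦ by rw [Nat.sub_sub]; ring
      _ = 1 := ih
  · rw [Icc_self, sum_singleton, Nat.sub_self, hP.diag,
      one_div_mul_cancel (hA n (mem_Icc.2 ⟨hk.1.trans hk.2, le_rfl⟩))]

theorem nonneg_s7 (hP : IsComplementaryKernel_s7 A n P) (hA : ∀ j ∈ Icc 1 n, 0 < A j 0)
    (hAanti : ∀ k ∈ Icc 1 n, ∀ i, 1 ≤ i → i < k → A k i ≤ A k (i - 1)) :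
    ∀ j ∈ Icc 1 n, 0 ≤ P j := by
  intro j hj
  induction j using Nat.strong_decreasing_induction with
  | base => exact ⟨n, fun m hm hm' ↦ absurd (mem_Icc.1 hm').2 (by omega)⟩
  | step j ih =>
    rw [mem_Icc] at hj
    rcases hj.2.eq_or_lt with rfl | hjn
    · rw [hP.diag]
      exact (one_div_pos.2 (hA j (mem_Icc.2 hj))).le
    · rw [hP.recurrence j hj.1 hjn]
      refine mul_nonneg (one_div_pos.2 (hA j (mem_Icc.2 hj))).le
        (sum_nonneg fun k hk ↦ mul_nonneg ?_ (ih k ?_ ?_))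
      all_goals rw [mem_Icc] at hk
      · exact sub_nonneg.2 (hAanti k (mem_Icc.2 ⟨by omega, hk.2⟩) (k - j) (by omega) (by omega))
      · omega
      · exact mem_Icc.2 ⟨by omega, hk.2⟩

end IsComplementaryKernel_s7

theorem sum_le_mul_sum_of_sum_mul_eq_one {A : ℕ → ℕ → ℝ} {n : ℕ} {P w : ℕ → ℝ} {c : ℝ}
    (hP0 : ∀ j ∈ Icc 1 n, 0 ≤ P j) (hPA : ∀ k ∈ Icc 1 n, ∑ j ∈ Icc k n, P j * A j (j - k) = 1)
    (hw : ∀ j ∈ Icc 1 n, 1 ≤ c * ∑ k ∈ Icc 1 j, A j (j - k) * w k) :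
    ∑ j ∈ Icc 1 n, P j ≤ c * ∑ k ∈ Icc 1 n, w k :=
  calc ∑ j ∈ Icc 1 n, P j
      ≤ ∑ j ∈ Icc 1 n, P j * (c * ∑ k ∈ Icc 1 j, A j (j - k) * w k) :=
        sum_le_sum fun j hj ↦ le_mul_of_one_le_right (hP0 j hj) (hw j hj)
    _ = c * ∑ j ∈ Icc 1 n, ∑ k ∈ Icc 1 j, P j * A j (j - k) * w k := by
        simp only [mul_sum]
        exact sum_congr rfl fun j _ ↦ sum_congr rfl fun k _ ↦ by ring
    _ = c * ∑ k ∈ Icc 1 n, ∑ j ∈ Icc k n, P j * A j (j - k) * w k := by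
        rw [sum_comm' (t' := Icc 1 n) (s' := fun k ↦ Icc k n)]
        intro j k
        simp only [mem_Icc]
        omega
    _ = c * ∑ k ∈ Icc 1 n, w k := by
        rw [sum_congr rfl fun k hk ↦ by rw [← sum_mul, hPA k hk, one_mul]]

theorem one_le_mul_sum_mul_integral_omegaK {α πA : ℝ} (hα0 : 0 < α) (hα1 : α < 1) (hπA : 0 < πA)
    {t : ℕ → ℝ} {n : ℕ} (hn : 1 ≤ n) (ht0 : t 0 = 0) (ht : StrictMonoOn t (Set.Iic n))
    {a : ℕ → ℝ} (ha : ∀ k ∈ Icc 1 n, a k ≥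
      1 / (πA * (t k - t (k - 1))) * ∫ s in t (k - 1)..t k, omegaK (1 - α) (t n - s)) :
    1 ≤ πA * ∑ k ∈ Icc 1 n, a k * ∫ s in t (k - 1)..t k, omegaK α s := by
  have mem : ∀ i ≤ n, i ∈ Set.Iic n := fun _ h ↦ h
  have ht_nonneg : ∀ i ≤ n, 0 ≤ t i := fun i hi ↦
    ht0 ▸ ht.monotoneOn (mem 0 (Nat.zero_le n)) (mem i hi) (Nat.zero_le i)
  have htn : 0 < t n := ht0 ▸ ht (mem 0 (Nat.zero_le n)) (mem n le_rfl) hn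
  have hα' : 0 < 1 - α := by linarith
  have hprod := intervalIntegrable_omegaK_sub_mul_omegaK hα' hα0 htn
  have hpiece : ∀ k ∈ Icc 1 n, ∫ s in t (k - 1)..t k, omegaK (1 - α) (t n - s) * omegaK α s ≤
      πA * (a k * ∫ s in t (k - 1)..t k, omegaK α s) := by
    intro k hk
    rw [mem_Icc] at hk
    have hτ : t (k - 1) < t k := ht (mem _ (by omega)) (mem k hk.2) (by omega)
    have hcheb := mul_integral_omegaK_sub_mul_omegaK_le hα' (by linarith) hα0 hα1.le
      (ht_nonneg _ (by omega)) hτ (ht.monotoneOn (mem k hk.2) (mem n le_rfl) hk.2)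
    have hA2 : ∫ s in t (k - 1)..t k, omegaK (1 - α) (t n - s) ≤
        πA * (t k - t (k - 1)) * a k := by
      have := ha k (mem_Icc.2 hk)
      rw [ge_iff_le, one_div_mul_eq_div, div_le_iff₀ (by nlinarith)] at this
      linarith
    have hq : 0 ≤ ∫ s in t (k - 1)..t k, omegaK α s :=
      intervalIntegral.integral_nonneg hτ.le fun s hs ↦
        omegaK_nonneg hα0 ((ht_nonneg _ (by omega)).trans hs.1)
    refine le_of_mul_le_mul_left ?_ (sub_pos.2 hτ)
    calc _ ≤ _ := hcheb
      _ ≤ πA * (t k - t (k - 1)) * a k * ∫ s in t (k - 1)..t k, omegaK α s :=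
          mul_le_mul_of_nonneg_right hA2 hq
      _ = _ := by ring
  calc (1 : ℝ) = ∫ s in t 0..t n, omegaK (1 - α) (t n - s) * omegaK α s := by
        rw [ht0, integral_omegaK_sub_mul_omegaK hα' hα0 htn, sub_add_cancel]
        simp [omegaK]
    _ = ∑ k ∈ Icc 1 n, ∫ s in t (k - 1)..t k, omegaK (1 - α) (t n - s) * omegaK α s := by
        refine (sum_Icc_integral_eq_integral fun i hi ↦ hprod.mono_set ?_).symm
        refine Set.uIcc_subset_uIcc ?_ ?_ <;> rw [Set.uIcc_of_le htn.le]
        · exact ⟨ht_nonneg i (by omega), ht.monotoneOn (mem i (by omega)) (mem n le_rfl) hi.le⟩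
        · exact ⟨ht_nonneg (i + 1) hi, ht.monotoneOn (mem _ hi) (mem n le_rfl) hi⟩
    _ ≤ ∑ k ∈ Icc 1 n, πA * (a k * ∫ s in t (k - 1)..t k, omegaK α s) := sum_le_sum hpiece
    _ = _ := (mul_sum ..).symm

theorem complementary_kernel_sum_bound_general
    (N : ℕ)
    (t : ℕ → ℝ) (ht0 : t 0 = 0)
    (hmesh : ∀ k, 1 ≤ k → k ≤ N → t (k - 1) < t k)
    (α : ℝ) (hα0 : 0 < α) (hα1 : α < 1)
    (A : ℕ → ℕ → ℝ)
    -- assumption A1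
    (hA1 : ∀ n k, 2 ≤ k → k ≤ n → n ≤ N → A n (k - 2) ≥ A n (k - 1) ∧ 0 < A n (k - 1))
    (hApos : ∀ n, 1 ≤ n → n ≤ N → 0 < A n 0)
    -- assumption A2 with constant πA
    (πA : ℝ) (hπA : 0 < πA)
    (hA2 : ∀ n k, 1 ≤ k → k ≤ n → n ≤ N →
      A n (n - k) ≥ (1 / (πA * (t k - t (k - 1)))) *
        ∫ s in (t (k - 1))..(t k), omegaK (1 - α) (t n - s))
    -- the complementary kernel `P n j = P^{(n)}_{n-j}`
    (P : ℕ → ℕ → ℝ)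
    (hPdiag : ∀ n, 1 ≤ n → n ≤ N → P n n = 1 / A n 0)
    (hPrec : ∀ n j, 1 ≤ j → j + 1 ≤ n → n ≤ N →
      P n j = (1 / A j 0) *
        ∑ k ∈ Finset.Icc (j + 1) n, (A k (k - j - 1) - A k (k - j)) * P n k) :
    ∀ n, 1 ≤ n → n ≤ N →
      ∑ j ∈ Finset.Icc 1 n, P n j ≤ πA * omegaK (1 + α) (t n) := by
  intro n hn hnN
  have ht : StrictMonoOn t (Set.Iic N) :=
    strictMonoOn_Iic_of_lt_succ fun m hm ↦ by simpa using hmesh (m + 1) (by omega) hm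
  have hP : IsComplementaryKernel_s7 A n (P n) :=
    ⟨hPdiag n hn hnN, fun j hj hjn ↦ hPrec n j hj hjn hnN⟩
  have hA : ∀ j ∈ Icc 1 n, 0 < A j 0 := fun j hj ↦
    hApos j (mem_Icc.1 hj).1 ((mem_Icc.1 hj).2.trans hnN)
  have hAanti : ∀ k ∈ Icc 1 n, ∀ i, 1 ≤ i → i < k → A k i ≤ A k (i - 1) := by
    intro k hk i hi hik
    simpa using (hA1 k (i + 1) (by omega) hik ((mem_Icc.1 hk).2.trans hnN)).1
  calc ∑ j ∈ Icc 1 n, P n j ≤ πA * ∑ k ∈ Icc 1 n, ∫ s in t (k - 1)..t k, omegaK α s :=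
        sum_le_mul_sum_of_sum_mul_eq_one (hP.nonneg_s7 hA hAanti)
          (hP.sum_mul_eq_one fun j hj ↦ (hA j hj).ne') fun j hj ↦
          one_le_mul_sum_mul_integral_omegaK hα0 hα1 hπA (mem_Icc.1 hj).1 ht0
            (ht.mono (Set.Iic_subset_Iic.2 ((mem_Icc.1 hj).2.trans hnN))) fun k hk ↦
            hA2 j k (mem_Icc.1 hk).1 (mem_Icc.1 hk).2 ((mem_Icc.1 hj).2.trans hnN)
    _ = πA * omegaK (1 + α) (t n) := by
        rw [sum_Icc_integral_eq_integral fun _ _ ↦ intervalIntegrable_omegaK hα0 _ _, ht0,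
          integral_omegaK hα0, add_comm]

theorem complementary_kernel_sum_bound
    (T : ℝ) (hT : 0 < T) (N : ℕ) (hN : 1 ≤ N)
    (t : ℕ → ℝ) (ht0 : t 0 = 0) (htN : t N = T)
    (hmesh : ∀ k, 1 ≤ k → k ≤ N → t (k - 1) < t k)
    (α : ℝ) (hα0 : 0 < α) (hα1 : α < 1)
    (A : ℕ → ℕ → ℝ)
    -- assumption A1
    (hA1 : ∀ n k, 2 ≤ k → k ≤ n → n ≤ N → A n (k - 2) ≥ A n (k - 1) ∧ 0 < A n (k - 1))
    (hApos : ∀ n, 1 ≤ n → n ≤ N → 0 < A n 0)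
    -- assumption A2 with constant πA
    (πA : ℝ) (hπA : 0 < πA)
    (hA2 : ∀ n k, 1 ≤ k → k ≤ n → n ≤ N →
      A n (n - k) ≥ (1 / (πA * (t k - t (k - 1)))) *
        ∫ s in (t (k - 1))..(t k), omegaK (1 - α) (t n - s))
    -- the complementary kernel `P n j = P^{(n)}_{n-j}`
    (P : ℕ → ℕ → ℝ)
    (hPdiag : ∀ n, 1 ≤ n → n ≤ N → P n n = 1 / A n 0)
    (hPrec : ∀ n j, 1 ≤ j → j + 1 ≤ n → n ≤ N →
      P n j = (1 / A j 0) *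
        ∑ k ∈ Finset.Icc (j + 1) n, (A k (k - j - 1) - A k (k - j)) * P n k) :
    ∀ n, 1 ≤ n → n ≤ N →
      ∑ j ∈ Finset.Icc 1 n, P n j ≤ πA * omegaK (1 + α) (t n) :=
  complementary_kernel_sum_bound_general N t ht0 hmesh α hα0 hα1 A hA1 hApos πA hπA hA2 P hPdiag
    hPrec
end

section
/- Let H be a real inner product space, n ≥ 1, and let A_0 ≥ A_1 ≥ ⋯ ≥ A_{n−1} > 0 be real numbers. Then for any vectors w^0, w^1, …, w^n ∈ H one has ⟨ Σ_{k=1}^n A_{n−k}(w^k − w^{k−1}), w^n ⟩ ≥ ‖w^n‖ · Σ_{k=1}^n A_{n−k}(‖w^k‖ − ‖w^{k−1}‖). -/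
/-!
Put `d k = ⟪w k, w n⟫ - ‖w k‖ * ‖w n‖`. By Cauchy–Schwarz `d k ≤ 0`, and `d n = 0`; the difference
of the two sides of the inequality is `∑ A (n - k) * (d k - d (k - 1))`. The weights `A (n - k)` are
nonnegative and nondecreasing in `k`, so summation by parts bounds this sum below by
`A 0 * d n = 0`.
-/

open Finset
open scoped RealInnerProductSpace

theorem mul_le_sum_Icc_mul_sub_of_nonpos {R : Type*} [CommRing R] [LinearOrder R]
    [IsStrictOrderedRing R] {b h : ℕ → R} {n : ℕ} (hn : 1 ≤ n) (hb : 0 ≤ b 1)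
    (hb_mono : ∀ k, 1 ≤ k → k < n → b k ≤ b (k + 1)) (hh : ∀ k, h k ≤ 0) :
    b n * h n ≤ ∑ k ∈ Icc 1 n, b k * (h k - h (k - 1)) := by
  induction n, hn using Nat.le_induction with
  | base =>
    rw [Icc_self, sum_singleton, mul_sub]
    linarith [mul_nonpos_of_nonneg_of_nonpos hb (hh 0)]
  | succ n hn ih =>
    rw [sum_Icc_succ_top (by omega), Nat.add_sub_cancel]
    have ih := ih fun k hk hkn => hb_mono k hk (by omega)
    have hstep : b n ≤ b (n + 1) := hb_mono n hn (by omega)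
    nlinarith [hh n, hh (n + 1)]

theorem sum_inner_smul_sub_sub_mul_sum_norm_sub {H : Type*} [NormedAddCommGroup H]
    [InnerProductSpace ℝ H] (s : Finset ℕ) (a : ℕ → ℝ) (w : ℕ → H) (v : H) :
    ⟪∑ k ∈ s, a k • (w k - w (k - 1)), v⟫ - ‖v‖ * ∑ k ∈ s, a k * (‖w k‖ - ‖w (k - 1)‖) =
      ∑ k ∈ s, a k * ((⟪w k, v⟫ - ‖w k‖ * ‖v‖) - (⟪w (k - 1), v⟫ - ‖w (k - 1)‖ * ‖v‖)) := by
  rw [sum_inner, mul_sum, ← sum_sub_distrib]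
  refine sum_congr rfl fun k _ => ?_
  rw [real_inner_smul_left, inner_sub_left]
  ring

theorem discrete_convolution_inner_product_bound
    {H : Type*} [NormedAddCommGroup H] [InnerProductSpace ℝ H]
    (n : ℕ) (hn : 1 ≤ n)
    (A : ℕ → ℝ)
    (hpos : 0 < A (n - 1))
    (hmono : ∀ j, j + 1 ≤ n - 1 → A (j + 1) ≤ A j)
    (w : ℕ → H) :
    ⟪∑ k ∈ Finset.Icc 1 n, A (n - k) • (w k - w (k - 1)), w n⟫ ≥
      ‖w n‖ * ∑ k ∈ Finset.Icc 1 n, A (n - k) * (‖w k‖ - ‖w (k - 1)‖) := by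
  set d : ℕ → ℝ := fun k => ⟪w k, w n⟫ - ‖w k‖ * ‖w n‖
  have hd : ∀ k, d k ≤ 0 := fun k => sub_nonpos.2 (real_inner_le_norm _ _)
  have hdn : d n = 0 := by simp [d, sq]
  have hA_mono : ∀ k, 1 ≤ k → k < n → A (n - k) ≤ A (n - (k + 1)) := fun k hk hkn => by
    have := hmono (n - (k + 1)) (by omega)
    rwa [show n - (k + 1) + 1 = n - k by omega] at this
  have key := mul_le_sum_Icc_mul_sub_of_nonpos (b := fun k => A (n - k)) hn hpos.le hA_mono hd
  rw [hdn, mul_zero] at key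
  rw [ge_iff_le, ← sub_nonneg, sum_inner_smul_sub_sub_mul_sum_norm_sub]
  exact key
end

section
/- Let the kernels A^{(n)}_{j} satisfy assumption A1 and let P^{(n)}_{n−j} be the associated complementary kernels. Then P^{(n)}_{n−1} · A^{(1)}_0 ≤ 1 for every 1 ≤ n ≤ N; in particular, if A^{(1)}_0 = ω_{2−α}(τ_1)/τ_1 (the first L1 kernel value of order α ∈ (0,1)), then P^{(n)}_{n−1} ≤ Γ(2−α) τ_1^α. -/
/-!
The defining recursion telescopes into the discrete orthogonality identity
`∑_{j=m}^{n} P^{(n)}_{n-j} A^{(j)}_{j-m} = 1` for `1 ≤ m ≤ n`. Under A1 the recursion only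
combines nonnegative differences `A^{(k)}_{k-j-1} - A^{(k)}_{k-j}`, so the complementary kernels
are nonnegative, and dropping every term but `j = 1` from the identity at `m = 1` leaves
`P^{(n)}_{n-1} A^{(1)}_0 ≤ 1`. For the L1 kernel, `1 / A^{(1)}_0 = Γ(2-α) τ₁^α`.
-/

open Real Finset

/-- `p j` plays the role of `P^{(n)}_{n-j}`. -/
structure IsComplementaryKernelRow (A : ℕ → ℕ → ℝ) (n : ℕ) (p : ℕ → ℝ) : Prop where
  diag : p n = 1 / A n 0
  recurrence : ∀ j, 1 ≤ j → j < n →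
    p j = 1 / A j 0 * ∑ k ∈ Icc (j + 1) n, (A k (k - j - 1) - A k (k - j)) * p k

namespace IsComplementaryKernelRow

variable {A : ℕ → ℕ → ℝ} {n : ℕ} {p : ℕ → ℝ}

theorem sum_Icc_mul_eq_one (hp : IsComplementaryKernelRow A n p)
    (hA0 : ∀ j, 1 ≤ j → j ≤ n → A j 0 ≠ 0) {m : ℕ} (hm : 1 ≤ m) (hmn : m ≤ n) :
    ∑ j ∈ Icc m n, p j * A j (j - m) = 1 := by
  refine Nat.decreasingInduction' (fun k hkn hmk ih => ?_) hmn ?_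
  · have hk0 := hA0 k (by omega) hkn.le
    have hpk : p k * A k 0 = ∑ j ∈ Icc (k + 1) n, (A j (j - k - 1) - A j (j - k)) * p j := by
      rw [hp.recurrence k (by omega) hkn]
      field_simp
    rw [← add_sum_Ioc_eq_sum_Icc hkn.le, ← Icc_add_one_left_eq_Ioc, Nat.sub_self, hpk,
      ← sum_add_distrib, ← ih]
    refine sum_congr rfl fun j _ => ?_
    rw [Nat.sub_sub]
    ring
  · rw [Icc_self, sum_singleton, Nat.sub_self, hp.diag, one_div_mul_cancel (hA0 n (by omega) le_rfl)]

theorem nonneg (hp : IsComplementaryKernelRow A n p) (hA0 : ∀ j, 1 ≤ j → j ≤ n → 0 < A j 0)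
    (hanti : ∀ k i, 1 ≤ i → i < k → k ≤ n → A k i ≤ A k (i - 1)) {j : ℕ} (hj : 1 ≤ j)
    (hjn : j ≤ n) : 0 ≤ p j := by
  revert hj hjn
  refine Nat.strong_decreasing_induction ⟨n, fun m hm _ hmn => absurd hmn (by omega)⟩
    (fun j ih hj hjn => ?_) j
  rcases hjn.eq_or_lt with rfl | hjn
  · rw [hp.diag]
    exact (one_div_pos.2 (hA0 j hj le_rfl)).le
  rw [hp.recurrence j hj hjn]
  refine mul_nonneg (one_div_pos.2 (hA0 j hj hjn.le)).le (sum_nonneg fun k hk => ?_)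
  rw [mem_Icc] at hk
  have hdiff := hanti k (k - j) (by omega) (by omega) hk.2
  rw [Nat.sub_sub] at hdiff ⊢
  exact mul_nonneg (sub_nonneg.2 hdiff) (ih k (by omega) (by omega) hk.2)

theorem first_mul_le_one (hp : IsComplementaryKernelRow A n p)
    (hA0 : ∀ j, 1 ≤ j → j ≤ n → 0 < A j 0)
    (hanti : ∀ k i, 1 ≤ i → i < k → k ≤ n → A k i ≤ A k (i - 1))
    (hlast : ∀ j, 2 ≤ j → j ≤ n → 0 ≤ A j (j - 1)) (hn : 1 ≤ n) :
    p 1 * A 1 0 ≤ 1 := by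
  have hsum := hp.sum_Icc_mul_eq_one (fun j hj hjn => (hA0 j hj hjn).ne') le_rfl hn
  rw [← add_sum_Ioc_eq_sum_Icc hn, ← Icc_add_one_left_eq_Ioc, Nat.sub_self] at hsum
  have htail : 0 ≤ ∑ j ∈ Icc 2 n, p j * A j (j - 1) := sum_nonneg fun j hj => by
    rw [mem_Icc] at hj
    exact mul_nonneg (hp.nonneg hA0 hanti (by omega) hj.2) (hlast j hj.1 hj.2)
  simp only [Nat.reduceAdd] at hsum
  linarith

end IsComplementaryKernelRow

theorem inv_omegaK_two_sub_div_self {τ : ℝ} (hτ : 0 < τ) (α : ℝ) :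
    (omegaK (2 - α) τ / τ)⁻¹ = Gamma (2 - α) * τ ^ α := by
  have hpow : τ ^ α = τ / τ ^ (1 - α) := by
    simpa only [rpow_one, sub_sub_cancel] using rpow_sub hτ 1 (1 - α)
  rw [omegaK, hpow, show 2 - α - 1 = 1 - α by ring, inv_div, div_div_eq_mul_div]
  ring

theorem complementary_kernel_first_entry_bound_general
    (N : ℕ)
    (t : ℕ → ℝ)
    (hmesh : ∀ k, 1 ≤ k → k ≤ N → t (k - 1) < t k)
    (α : ℝ)
    (A : ℕ → ℕ → ℝ)
    -- assumption A1
    (hA1 : ∀ n k, 2 ≤ k → k ≤ n → n ≤ N → A n (k - 2) ≥ A n (k - 1) ∧ 0 < A n (k - 1))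
    (hApos : ∀ n, 1 ≤ n → n ≤ N → 0 < A n 0)
    -- the complementary kernel `P n j = P^{(n)}_{n-j}`
    (P : ℕ → ℕ → ℝ)
    (hPdiag : ∀ n, 1 ≤ n → n ≤ N → P n n = 1 / A n 0)
    (hPrec : ∀ n j, 1 ≤ j → j + 1 ≤ n → n ≤ N →
      P n j = (1 / A j 0) *
        ∑ k ∈ Finset.Icc (j + 1) n, (A k (k - j - 1) - A k (k - j)) * P n k) :
    ∀ n, 1 ≤ n → n ≤ N →
      P n 1 * A 1 0 ≤ 1 ∧
      (A 1 0 = omegaK (2 - α) (t 1 - t 0) / (t 1 - t 0) →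
        P n 1 ≤ Real.Gamma (2 - α) * (t 1 - t 0) ^ α) := by
  intro n hn hnN
  have hrow : IsComplementaryKernelRow A n (P n) :=
    ⟨hPdiag n hn hnN, fun j hj hjn => hPrec n j hj hjn hnN⟩
  have hA0 : ∀ j, 1 ≤ j → j ≤ n → 0 < A j 0 := fun j hj hjn => hApos j hj (hjn.trans hnN)
  have hanti : ∀ k i, 1 ≤ i → i < k → k ≤ n → A k i ≤ A k (i - 1) := fun k i hi hik hkn => by
    have hmono := (hA1 k (i + 1) (by omega) hik (hkn.trans hnN)).1
    rwa [show i + 1 - 2 = i - 1 by omega, Nat.add_sub_cancel] at hmono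
  have hlast : ∀ j, 2 ≤ j → j ≤ n → 0 ≤ A j (j - 1) := fun j hj hjn =>
    (hA1 j j hj le_rfl (hjn.trans hnN)).2.le
  have hfirst := hrow.first_mul_le_one hA0 hanti hlast hn
  refine ⟨hfirst, fun hL1 => ?_⟩
  have hτ : 0 < t 1 - t 0 := sub_pos.2 (hmesh 1 le_rfl (hn.trans hnN))
  rw [← inv_omegaK_two_sub_div_self hτ α, ← hL1, ← one_div, le_div_iff₀ (hA0 1 le_rfl hn)]
  exact hfirst

theorem complementary_kernel_first_entry_bound
    (T : ℝ) (hT : 0 < T) (N : ℕ) (hN : 1 ≤ N)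
    (t : ℕ → ℝ) (ht0 : t 0 = 0) (htN : t N = T)
    (hmesh : ∀ k, 1 ≤ k → k ≤ N → t (k - 1) < t k)
    (α : ℝ) (hα0 : 0 < α) (hα1 : α < 1)
    (A : ℕ → ℕ → ℝ)
    -- assumption A1
    (hA1 : ∀ n k, 2 ≤ k → k ≤ n → n ≤ N → A n (k - 2) ≥ A n (k - 1) ∧ 0 < A n (k - 1))
    (hApos : ∀ n, 1 ≤ n → n ≤ N → 0 < A n 0)
    -- the complementary kernel `P n j = P^{(n)}_{n-j}`
    (P : ℕ → ℕ → ℝ)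
    (hPdiag : ∀ n, 1 ≤ n → n ≤ N → P n n = 1 / A n 0)
    (hPrec : ∀ n j, 1 ≤ j → j + 1 ≤ n → n ≤ N →
      P n j = (1 / A j 0) *
        ∑ k ∈ Finset.Icc (j + 1) n, (A k (k - j - 1) - A k (k - j)) * P n k) :
    ∀ n, 1 ≤ n → n ≤ N →
      P n 1 * A 1 0 ≤ 1 ∧
      (A 1 0 = omegaK (2 - α) (t 1 - t 0) / (t 1 - t 0) →
        P n 1 ≤ Real.Gamma (2 - α) * (t 1 - t 0) ^ α) :=
  complementary_kernel_first_entry_bound_general N t hmesh α A hA1 hApos P hPdiag hPrec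
end
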